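/- arXiv:1412.6858 — 2 statements merged into one kernel-verified Lean document; each statement's English description precedes it below -/
import Mathlib

section
/- In the general fixed-point-matrix setup, suppose that T_J ∩ T_G = {0}, that Range(I − W_J) ∩ S_G = {0}, and that Range(I − W_G) ∩ T_G = {0}. Then Fix M = ker(W_G(I − W_J) + (I − W_G) W_J) = {0}, and hence M^∞ = 0. -/
noncomputable section
open Filter Topology

/-- `ℝⁿ` as a Euclidean space. -/
abbrev E (n : ℕ) := EuclideanSpace ℝ (Fin n)

/-- Orthogonal projection onto a subspace `T`, as an endomorphism of `ℝⁿ`. -/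
def projCLM {n : ℕ} (T : Submodule ℝ (E n)) : E n →L[ℝ] E n :=
  T.subtypeL.comp T.orthogonalProjection

/-- A linear map is symmetric positive semidefinite. -/
def IsSymPSD {n : ℕ} (A : E n →L[ℝ] E n) : Prop :=
  (∀ x y : E n, (inner ℝ (A x) y : ℝ) = inner ℝ x (A y)) ∧ ∀ x : E n, (0 : ℝ) ≤ inner ℝ (A x) x

/-- `W = P_T ∘ (I + P_T ∘ H ∘ P_T)⁻¹ ∘ P_T`, the building block of the Douglas–Rachford
fixed-point matrix (`Ring.inverse` is the genuine inverse since `I + P_T H P_T` is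
invertible for symmetric positive semidefinite `H`). -/
def Wop {n : ℕ} (T : Submodule ℝ (E n)) (H : E n →L[ℝ] E n) : E n →L[ℝ] E n :=
  projCLM T * Ring.inverse (1 + projCLM T * H * projCLM T) * projCLM T

/-- The Douglas–Rachford fixed-point matrix `M = I + 2 W_G W_J − W_G − W_J`. -/
def Mop {n : ℕ} (TJ TG : Submodule ℝ (E n)) (HJ HG : E n →L[ℝ] E n) : E n →L[ℝ] E n :=
  1 + (2 : ℝ) • (Wop TG HG * Wop TJ HJ) - Wop TG HG - Wop TJ HJ

/-- The relaxed matrix `M_λ = (1 − λ) I + λ M`. -/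
def Mlam {n : ℕ} (lam : ℝ) (TJ TG : Submodule ℝ (E n)) (HJ HG : E n →L[ℝ] E n) :
    E n →L[ℝ] E n :=
  (1 - lam) • (1 : E n →L[ℝ] E n) + lam • Mop TJ TG HJ HG

/-- The fixed-point set `Fix A = {x | A x = x}` as a submodule, i.e. `ker (A − I)`. -/
def FixM {n : ℕ} (A : E n →L[ℝ] E n) : Submodule ℝ (E n) :=
  LinearMap.ker ((A - 1 : E n →L[ℝ] E n) : E n →ₗ[ℝ] E n)

/-- `M^∞`: the orthogonal projection onto `Fix M`. -/
def Minf {n : ℕ} (TJ TG : Submodule ℝ (E n)) (HJ HG : E n →L[ℝ] E n) : E n →L[ℝ] E n :=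
  projCLM (FixM (Mop TJ TG HJ HG))

/-- The spectral radius of an endomorphism of `ℝⁿ`: the supremum of the moduli of the
complex eigenvalues (eigenvalues of the complexified matrix). -/
def specRad {n : ℕ} (A : E n →L[ℝ] E n) : ℝ :=
  sSup ((fun z : ℂ => ‖z‖) ''
    spectrum ℂ (((LinearMap.toMatrix (EuclideanSpace.basisFun (Fin n) ℝ).toBasis
      (EuclideanSpace.basisFun (Fin n) ℝ).toBasis) A.toLinearMap).map (algebraMap ℝ ℂ)))

/-- The cosine of the Friedrichs angle between two subspaces `U` and `V`. -/
def cF {n : ℕ} (U V : Submodule ℝ (E n)) : ℝ :=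
  sSup {r : ℝ | ∃ u v : E n, u ∈ U ⊓ (U ⊓ V)ᗮ ∧ v ∈ V ⊓ (U ⊓ V)ᗮ ∧
    ‖u‖ ≤ 1 ∧ ‖v‖ ≤ 1 ∧ r = (inner ℝ u v : ℝ)}

/-!
Writing `K = W_G (I - W_J) + (I - W_G) W_J`, one has `M - I = -K`, so `Fix M = ker K`. If `K x = 0`
then `(I - W_G) W_J x = -W_G (I - W_J) x` lies in `Range(I - W_G) ∩ T_G`, hence vanishes; so
`W_J x ∈ T_J` is fixed by `W_G` and lies in `T_G` as well, hence `W_J x = 0`. Then `x = (I - W_J) x`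
and `W_G x = 0`. The vector `z = U P_{T_G} x` then satisfies `P_{T_G} z = W_G x = 0`, so
`z = (I + P) z = P_{T_G} x` and `P_{T_G} x = P_{T_G} z = 0`, i.e. `x ∈ S_G`. Thus
`x ∈ Range(I - W_J) ∩ S_G = {0}`.
-/

open LinearMap (range mem_range_self)

theorem ker_mul_one_sub_add_one_sub_mul_eq_bot {R V : Type*} [Ring R] [AddCommGroup V]
    [Module R V] {A B : Module.End R V} {TA TB S : Submodule R V}
    (hA : range A ≤ TA) (hB : range B ≤ TB) (hkerB : LinearMap.ker B ≤ S) (hT : TA ⊓ TB = ⊥)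
    (hAS : range (1 - A) ⊓ S = ⊥) (hBT : range (1 - B) ⊓ TB = ⊥) :
    LinearMap.ker (B * (1 - A) + (1 - B) * A) = ⊥ := by
  refine (Submodule.eq_bot_iff _).2 fun x hx => ?_
  replace hx : B ((1 - A) x) + (1 - B) (A x) = 0 := hx
  have hBAx : (1 - B) (A x) = 0 := by
    have hmem : (1 - B) (A x) ∈ range (1 - B) ⊓ TB := by
      refine ⟨mem_range_self _ _, ?_⟩
      rw [eq_neg_of_add_eq_zero_right hx]
      exact TB.neg_mem (hB (mem_range_self B _))
    simpa [hBT] using hmem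
  have hAx : A x = 0 := by
    have hfixB : B (A x) = A x := (sub_eq_zero.1 hBAx).symm
    have hmem : A x ∈ TA ⊓ TB := ⟨hA (mem_range_self A x), hfixB ▸ hB (mem_range_self B _)⟩
    simpa [hT] using hmem
  have hfixA : (1 - A) x = x := by simp [hAx]
  have hBx : B x = 0 := by simpa [hBAx, hfixA] using hx
  have hmem : x ∈ range (1 - A) ⊓ S := ⟨hfixA ▸ mem_range_self _ x, hkerB hBx⟩
  simpa [hAS] using hmem

theorem isUnit_one_add_of_inner_self_nonneg {F : Type*} [NormedAddCommGroup F]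
    [InnerProductSpace ℝ F] [FiniteDimensional ℝ F] {A : F →L[ℝ] F}
    (hA : ∀ x, 0 ≤ inner ℝ (A x) x) : IsUnit (1 + A) := by
  rw [ContinuousLinearMap.isUnit_iff_isUnit_toLinearMap, LinearMap.isUnit_iff_ker_eq_bot]
  refine (Submodule.eq_bot_iff _).2 fun x hx => ?_
  replace hx : x + A x = 0 := hx
  have hsum : inner ℝ x x + inner ℝ (A x) x = 0 := by rw [← inner_add_left, hx, inner_zero_left]
  exact inner_self_eq_zero.1 (le_antisymm (by linarith [hA x]) real_inner_self_nonneg)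

section Wop

variable {n : ℕ} (T : Submodule ℝ (E n)) (H : E n →L[ℝ] E n)

theorem projCLM_eq_starProjection : projCLM T = T.starProjection := rfl

theorem range_Wop_le : range (Wop T H : E n →ₗ[ℝ] E n) ≤ T := by
  rintro _ ⟨x, rfl⟩
  exact T.starProjection_apply_mem _

variable {H} in
theorem isUnit_one_add_projCLM_mul_mul_projCLM (hH : IsSymPSD H) :
    IsUnit (1 + projCLM T * H * projCLM T) :=
  isUnit_one_add_of_inner_self_nonneg fun x =>
    (T.inner_starProjection_left_eq_right (H (projCLM T x)) x).symm ▸ hH.2 (projCLM T x)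

theorem ker_Wop_le_orthogonal (hinv : IsUnit (1 + projCLM T * H * projCLM T)) :
    LinearMap.ker (Wop T H : E n →ₗ[ℝ] E n) ≤ Tᗮ := by
  intro x hx
  set y := projCLM T x
  set z := Ring.inverse (1 + projCLM T * H * projCLM T) y
  have hz : projCLM T z = 0 := hx
  have hzy : z = y := by
    have h : z + projCLM T (H (projCLM T z)) = y :=
      congrArg (· y) (Ring.mul_inverse_cancel _ hinv)
    rwa [hz, map_zero, map_zero, add_zero] at h
  have hy : y = 0 := by
    rw [← hz, hzy, projCLM_eq_starProjection, Submodule.starProjection_eq_self_iff.2]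
    exact T.starProjection_apply_mem x
  exact (T.starProjection_apply_eq_zero_iff).1 hy

end Wop

theorem Mop_sub_one {n : ℕ} (TJ TG : Submodule ℝ (E n)) (HJ HG : E n →L[ℝ] E n) :
    Mop TJ TG HJ HG - 1 =
      -(Wop TG HG * (1 - Wop TJ HJ) + (1 - Wop TG HG) * Wop TJ HJ) := by
  simp only [Mop, mul_sub, sub_mul, mul_one, one_mul]
  module

theorem statement10_general {n : ℕ} (TJ TG : Submodule ℝ (E n)) (HJ HG : E n →L[ℝ] E n)
    (hHG : IsSymPSD HG)
    (h1 : TJ ⊓ TG = ⊥)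
    (h2 : LinearMap.range ((1 - Wop TJ HJ : E n →L[ℝ] E n) : E n →ₗ[ℝ] E n) ⊓ TGᗮ = ⊥)
    (h3 : LinearMap.range ((1 - Wop TG HG : E n →L[ℝ] E n) : E n →ₗ[ℝ] E n) ⊓ TG = ⊥) :
    FixM (Mop TJ TG HJ HG) = ⊥ ∧
    LinearMap.ker ((Wop TG HG * (1 - Wop TJ HJ) + (1 - Wop TG HG) * Wop TJ HJ : E n →L[ℝ] E n) :
      E n →ₗ[ℝ] E n) = ⊥ ∧
    Minf TJ TG HJ HG = 0 := by
  have hker : LinearMap.ker ((Wop TG HG * (1 - Wop TJ HJ) + (1 - Wop TG HG) * Wop TJ HJ :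
      E n →L[ℝ] E n) : E n →ₗ[ℝ] E n) = ⊥ := by
    push_cast at h2 h3 ⊢
    exact ker_mul_one_sub_add_one_sub_mul_eq_bot (range_Wop_le TJ HJ) (range_Wop_le TG HG)
      (ker_Wop_le_orthogonal TG HG (isUnit_one_add_projCLM_mul_mul_projCLM TG hHG)) h1 h2 h3
  have hfix : FixM (Mop TJ TG HJ HG) = ⊥ := by
    rw [FixM, Mop_sub_one, ContinuousLinearMap.toLinearMap_neg, LinearMap.ker_neg, hker]
  refine ⟨hfix, hker, ?_⟩
  rw [Minf, hfix, projCLM_eq_starProjection, Submodule.starProjection_bot]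

/-- If `T_J ∩ T_G = {0}`, `Range(I − W_J) ∩ S_G = {0}` and
`Range(I − W_G) ∩ T_G = {0}`, then `Fix M = ker(W_G(I − W_J) + (I − W_G)W_J) = {0}` and
`M^∞ = 0`. -/
theorem statement10 {n : ℕ} (TJ TG : Submodule ℝ (E n)) (HJ HG : E n →L[ℝ] E n)
    (hHJ : IsSymPSD HJ) (hHG : IsSymPSD HG)
    (h1 : TJ ⊓ TG = ⊥)
    (h2 : LinearMap.range ((1 - Wop TJ HJ : E n →L[ℝ] E n) : E n →ₗ[ℝ] E n) ⊓ TGᗮ = ⊥)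
    (h3 : LinearMap.range ((1 - Wop TG HG : E n →L[ℝ] E n) : E n →ₗ[ℝ] E n) ⊓ TG = ⊥) :
    FixM (Mop TJ TG HJ HG) = ⊥ ∧
    LinearMap.ker ((Wop TG HG * (1 - Wop TJ HJ) + (1 - Wop TG HG) * Wop TJ HJ : E n →L[ℝ] E n) :
      E n →ₗ[ℝ] E n) = ⊥ ∧
    Minf TJ TG HJ HG = 0 :=
  statement10_general TJ TG HJ HG hHG h1 h2 h3
end
end

section
/- For any two linear subspaces U and V of ℝⁿ, the cosine of the Friedrichs angle between U and V is strictly less than 1: c_F(U,V) < 1. -/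
noncomputable section
open Filter Topology

/-!
Remove the common part `U ∩ V`: the subspaces `U ∩ (U ∩ V)ᗮ` and `V ∩ (U ∩ V)ᗮ` meet only in
`0`. If unit-ball vectors `u`, `v` of two such subspaces had `⟪u, v⟫ ≥ 1`, then
`‖u - v‖² = ‖u‖² - 2⟪u, v⟫ + ‖v‖² ≤ 0`, so `u = v` would lie in both and be `0`. By
compactness of the unit balls, the supremum is attained, hence also `< 1`.
-/

open Metric Set

section

variable {F : Type*} [NormedAddCommGroup F] [InnerProductSpace ℝ F]

theorem real_inner_lt_one_of_disjoint {A B : Submodule ℝ F} (hAB : Disjoint A B)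
    {u v : F} (hu : u ∈ A) (hv : v ∈ B) (hu1 : ‖u‖ ≤ 1) (hv1 : ‖v‖ ≤ 1) :
    inner ℝ u v < 1 := by
  by_contra! h
  have huv : u = v := by
    rw [← sub_eq_zero, ← norm_eq_zero, ← sq_eq_zero_iff (M₀ := ℝ)]
    refine le_antisymm ?_ (sq_nonneg _)
    rw [norm_sub_sq_real]
    nlinarith [norm_nonneg u, norm_nonneg v]
  have hu0 : u = 0 := Submodule.disjoint_def.mp hAB u hu (huv ▸ hv)
  norm_num [hu0] at h

theorem setOf_real_inner_eq_image (A B : Submodule ℝ F) :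
    {r : ℝ | ∃ u v : F, u ∈ A ∧ v ∈ B ∧ ‖u‖ ≤ 1 ∧ ‖v‖ ≤ 1 ∧ r = inner ℝ u v} =
      (fun p : F × F => inner ℝ p.1 p.2) ''
        (((A : Set F) ∩ closedBall 0 1) ×ˢ ((B : Set F) ∩ closedBall 0 1)) := by
  ext r
  simp only [mem_image, mem_prod, mem_inter_iff, mem_closedBall_zero_iff,
    SetLike.mem_coe, Prod.exists]
  constructor
  · rintro ⟨u, v, hu, hv, hu1, hv1, rfl⟩
    exact ⟨u, v, ⟨⟨hu, hu1⟩, hv, hv1⟩, rfl⟩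
  · rintro ⟨u, v, ⟨⟨hu, hu1⟩, hv, hv1⟩, rfl⟩
    exact ⟨u, v, hu, hv, hu1, hv1, rfl⟩

theorem sSup_real_inner_lt_one_of_disjoint [FiniteDimensional ℝ F] {A B : Submodule ℝ F}
    (hAB : Disjoint A B) :
    sSup {r : ℝ | ∃ u v : F, u ∈ A ∧ v ∈ B ∧ ‖u‖ ≤ 1 ∧ ‖v‖ ≤ 1 ∧ r = inner ℝ u v} < 1 := by
  have hball (C : Submodule ℝ F) : IsCompact ((C : Set F) ∩ closedBall 0 1) :=
    (isCompact_closedBall 0 1).inter_left (Submodule.closed_of_finiteDimensional C)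
  have hzero (C : Submodule ℝ F) : (0 : F) ∈ (C : Set F) ∩ closedBall 0 1 :=
    ⟨C.zero_mem, mem_closedBall_self zero_le_one⟩
  rw [setOf_real_inner_eq_image,
    ((hball A).prod (hball B)).sSup_lt_iff_of_continuous ⟨(0, 0), hzero A, hzero B⟩
      continuous_inner.continuousOn]
  rintro ⟨u, v⟩ ⟨⟨hu, hu1⟩, hv, hv1⟩
  exact real_inner_lt_one_of_disjoint hAB hu hv (mem_closedBall_zero_iff.mp hu1)
    (mem_closedBall_zero_iff.mp hv1)

theorem disjoint_inf_orthogonal_inf_orthogonal (U V : Submodule ℝ F) :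
    Disjoint (U ⊓ (U ⊓ V)ᗮ) (V ⊓ (U ⊓ V)ᗮ) := by
  rw [Submodule.disjoint_def]
  rintro x ⟨hxU, hxW⟩ ⟨hxV, -⟩
  exact Submodule.disjoint_def.mp (U ⊓ V).orthogonal_disjoint x ⟨hxU, hxV⟩ hxW

end

/-- The cosine of the Friedrichs angle between any two subspaces of `ℝⁿ`
is strictly less than `1`. -/
theorem statement14 {n : ℕ} (U V : Submodule ℝ (E n)) : cF U V < 1 :=
  sSup_real_inner_lt_one_of_disjoint (disjoint_inf_orthogonal_inf_orthogonal U V)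
end
end
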